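/- Let b ≥ 0, Δt > 0, Δx > 0, and let u: ℤ → ℝ be a bounded nonnegative sequence. Define D⁰(u)ᵢ = (u_{i+1} − u_{i−1})/(2Δx), ∂_{i+1/2}(u) = (D⁰(u)_{i+1} + D⁰(u)ᵢ)/2, and the upwind flux F_{i+1/2}(u) = 2b·∂_{i+1/2}(u)·uᵢ if ∂_{i+1/2}(u) ≥ 0 and 2b·∂_{i+1/2}(u)·u_{i+1} otherwise. If Δt ≤ Δx/(4b·sup_i |∂_{i+1/2}(u)|), then the upwind step (H⁽²⁾(u))ᵢ = uᵢ − (Δt/Δx)·(F_{i+1/2}(u) − F_{i−1/2}(u)) satisfies (H⁽²⁾(u))ᵢ ≥ 0 for all i ∈ ℤ. -/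
import Mathlib


/-- Central difference approximation of the first derivative. -/
noncomputable def D0 (Δx : ℝ) (u : ℤ → ℝ) (i : ℤ) : ℝ :=
  (u (i + 1) - u (i - 1)) / (2 * Δx)

/-- Approximation `∂_{i+1/2}(u)` of `u_x` at the right cell boundary. -/
noncomputable def dHalf (Δx : ℝ) (u : ℤ → ℝ) (i : ℤ) : ℝ :=
  (D0 Δx u (i + 1) + D0 Δx u i) / 2

/-- Upwind numerical flux `F_{i+1/2}(u)`. -/
noncomputable def upwindFlux (b Δx : ℝ) (u : ℤ → ℝ) (i : ℤ) : ℝ :=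
  if 0 ≤ dHalf Δx u i then 2 * b * dHalf Δx u i * u i
  else 2 * b * dHalf Δx u i * u (i + 1)

/-- The upwind step `(H⁽²⁾(u))ᵢ = uᵢ − (Δt/Δx)(F_{i+1/2} − F_{i−1/2})` preserves nonnegativity
provided `Δt ≤ Δx/(4b · sup_i |∂_{i+1/2}(u)|)`. -/
theorem upwind_scheme_positivity_preserving
    (b Δt Δx : ℝ) (hb : 0 ≤ b) (hΔt : 0 < Δt) (hΔx : 0 < Δx)
    (u : ℤ → ℝ) (hu : ∀ i, 0 ≤ u i)
    (hbdd : BddAbove (Set.range fun i => |u i|))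
    (hsup : 0 < ⨆ i : ℤ, |dHalf Δx u i|)
    (hCFL : Δt ≤ Δx / (4 * b * ⨆ i : ℤ, |dHalf Δx u i|)) :
    ∀ i : ℤ, 0 ≤ u i - (Δt / Δx) * (upwindFlux b Δx u i - upwindFlux b Δx u (i - 1)) := by
  intro i
  rcases eq_or_lt_of_le hb with hb0 | hbpos
  · exfalso
    rw [← hb0] at hCFL
    simp at hCFL
    linarith
  set M : ℝ := ⨆ i : ℤ, |dHalf Δx u i| with hMdef
  obtain ⟨C, hC⟩ := hbdd
  have hCub : ∀ j, |u j| ≤ C := fun j => hC ⟨j, rfl⟩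
  have hbddD : BddAbove (Set.range fun i => |dHalf Δx u i|) := by
    refine ⟨C / Δx, ?_⟩
    rintro x ⟨j, rfl⟩
    show |dHalf Δx u j| ≤ C / Δx
    have hD : ∀ k : ℤ, |D0 Δx u k| ≤ C / Δx := by
      intro k
      have h1 := hCub (k + 1)
      have h2 := hCub (k - 1)
      rw [D0, abs_div, abs_of_pos (by positivity : (0:ℝ) < 2 * Δx),
        div_le_div_iff₀ (by positivity) hΔx]
      calc |u (k + 1) - u (k - 1)| * Δx ≤ (|u (k+1)| + |u (k-1)|) * Δx := by
            have := abs_sub (u (k+1)) (u (k-1))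
            nlinarith [abs_sub_abs_le_abs_sub (u (k+1)) (u (k-1)), abs_sub (u (k+1)) (u (k-1))]
        _ ≤ C * (2 * Δx) := by nlinarith
    have h1 := hD (j + 1)
    have h2 := hD j
    rw [dHalf, abs_div]
    have : |D0 Δx u (j + 1) + D0 Δx u j| ≤ 2 * (C / Δx) :=
      (abs_add_le _ _).trans (by linarith)
    rw [abs_two] at *
    linarith [this]
  have hdM : ∀ j, |dHalf Δx u j| ≤ M := fun j => le_ciSup hbddD j
  have hbM : 0 < 4 * b * M := by positivity
  have hkey : Δt / Δx * (4 * b * M) ≤ 1 := by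
    rw [div_mul_eq_mul_div, div_le_one hΔx]
    have := (le_div_iff₀ hbM).mp hCFL
    linarith
  have hl : 0 ≤ Δt / Δx := by positivity
  have hA := abs_le.mp (hdM i)
  have hB := abs_le.mp (hdM (i - 1))
  have hi1 : i - 1 + 1 = i := by ring
  have hui := hu i
  have hui1 := hu (i + 1)
  have huim := hu (i - 1)
  rw [upwindFlux, upwindFlux, hi1]
  split_ifs with h1 h2 h2
  · nlinarith [mul_nonneg hl hb, mul_nonneg (mul_nonneg hl hb) hui,
      mul_nonneg (mul_nonneg hl hb) huim, mul_nonneg (mul_nonneg (mul_nonneg hl hb) huim) h2,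
      mul_nonneg hui (mul_nonneg hl hb)]
  · nlinarith [mul_nonneg hl hb, mul_nonneg (mul_nonneg hl hb) hui,
      mul_nonneg (mul_nonneg hl hb) huim]
  · nlinarith [mul_nonneg hl hb, mul_nonneg (mul_nonneg hl hb) hui,
      mul_nonneg (mul_nonneg hl hb) hui1,
      mul_nonneg (mul_nonneg (mul_nonneg hl hb) huim) h2,
      mul_nonneg (mul_nonneg (mul_nonneg hl hb) hui1) (neg_nonneg.mpr (le_of_not_ge h1))]
  · nlinarith [mul_nonneg hl hb, mul_nonneg (mul_nonneg hl hb) hui,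
      mul_nonneg (mul_nonneg hl hb) hui1,
      mul_nonneg (mul_nonneg (mul_nonneg hl hb) hui1) (neg_nonneg.mpr (le_of_not_ge h1))]
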